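/- Suppose the system matrices A ∈ ℝ^{n_x×n_x}, Q ∈ ℝ^{n_x×n_x}, S ∈ ℝ^{n_u×n_x} satisfy: A is (a,γ)-SED with a ≥ 1, Q is (q,γ)-SED with q > 0, S is (s,γ)-SED with s > 0, N ≥ 2, and A is (τ,e^{−ρ})-stable. Let G := Σ_{t=0}^∞ (A^t)ᵀQA^t. Then for every integer m ≥ 0: (i) G·A^m is (τ²‖Q‖/(1−e^{−2ρ}) + 2q, γρ/(ρ + ln(aN)))-SED, and (ii) S·A^m is (s + τ‖S‖, γρ/(ρ + ln(aN)))-SED. -/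

import Mathlib

open scoped Matrix.Norms.L2Operator
open Matrix

noncomputable section

/-- Index type of a vector partitioned into `N` agent blocks of sizes `d`. -/
abbrev BIdx {N : ℕ} (d : Fin N → ℕ) : Type := (i : Fin N) × Fin (d i)

/-- The `(i,j)` agent block of a block-partitioned matrix. -/
def blk {N : ℕ} {d e : Fin N → ℕ} (X : Matrix (BIdx d) (BIdx e) ℝ) (i j : Fin N) :
    Matrix (Fin (d i)) (Fin (e j)) ℝ :=
  Matrix.of fun a b => X ⟨i, a⟩ ⟨j, b⟩

/-- `X` is `(c, γ)`-spatially exponentially decaying w.r.t. `dist`: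
`‖[X]_{ij}‖ ≤ c e^{-γ dist(i,j)}` for all agents `i, j`. -/
def IsSED {N : ℕ} {d e : Fin N → ℕ} (dist : Fin N → Fin N → ℝ) (c γ : ℝ)
    (X : Matrix (BIdx d) (BIdx e) ℝ) : Prop :=
  ∀ i j : Fin N, ‖blk X i j‖ ≤ c * Real.exp (-γ * dist i j)

/-- `dist` is nonnegative, symmetric, and satisfies the triangle inequality. -/
structure IsDist {N : ℕ} (dist : Fin N → Fin N → ℝ) : Prop where
  nonneg : ∀ i j, 0 ≤ dist i j
  symm : ∀ i j, dist i j = dist j i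
  triangle : ∀ i j k, dist i j ≤ dist i k + dist k j

/-- `A` is `(τ, e^{-ρ})`-stable: `‖A^k‖ ≤ τ e^{-ρ k}` for every `k ≥ 0`. -/
def IsExpStable {n : Type*} [Fintype n] [DecidableEq n] (τ ρ : ℝ)
    (A : Matrix n n ℝ) : Prop :=
  ∀ k : ℕ, ‖A ^ k‖ ≤ τ * Real.exp (-ρ * (k : ℝ))

/-- Smallest eigenvalue of a symmetric matrix, characterized via the Loewner order. -/
def eigMin {n : Type*} [Fintype n] [DecidableEq n] (A : Matrix n n ℝ) : ℝ :=
  sSup {t : ℝ | (A - t • (1 : Matrix n n ℝ)).PosSemidef}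

/-- Largest eigenvalue of a symmetric matrix, characterized via the Loewner order. -/
def eigMax {n : Type*} [Fintype n] [DecidableEq n] (A : Matrix n n ℝ) : ℝ :=
  sInf {t : ℝ | (t • (1 : Matrix n n ℝ) - A).PosSemidef}

/-- `G = ∑_{t=0}^∞ (A^t)ᵀ Q A^t`. -/
def Gmat {ιx : Type*} [Fintype ιx] [DecidableEq ιx] (A Q : Matrix ιx ιx ℝ) :
    Matrix ιx ιx ℝ :=
  ∑' t : ℕ, (A ^ t)ᵀ * Q * (A ^ t)

section LQRDefs

variable {ιx ιu : Type*} [Fintype ιx] [DecidableEq ιx] [Fintype ιu] [DecidableEq ιu]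

/-- The `(k,m)` block of `M^{(H)}` (blocks indexed by `1 ≤ k, m ≤ H`). -/
def Mblk (A : Matrix ιx ιx ℝ) (B : Matrix ιx ιu ℝ) (Q : Matrix ιx ιx ℝ)
    (R : Matrix ιu ιu ℝ) (S : Matrix ιu ιx ℝ) (k m : ℕ) : Matrix ιu ιu ℝ :=
  if k = m then Bᵀ * Gmat A Q * B + R
  else if m < k then Bᵀ * Gmat A Q * A ^ (k - m) * B + S * A ^ (k - m - 1) * B
  else Bᵀ * (A ^ (m - k))ᵀ * Gmat A Q * B + Bᵀ * (A ^ (m - k - 1))ᵀ * Sᵀ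

/-- The `k`-th block of `J^{(H)}` (blocks indexed by `1 ≤ k ≤ H`). -/
def Jblk (A : Matrix ιx ιx ℝ) (B : Matrix ιx ιu ℝ) (Q : Matrix ιx ιx ℝ)
    (S : Matrix ιu ιx ℝ) (k : ℕ) : Matrix ιu ιx ℝ :=
  Bᵀ * Gmat A Q * A ^ k + S * A ^ (k - 1)

/-- The `H × H` block matrix `M^{(H)}`. -/
def MH (H : ℕ) (A : Matrix ιx ιx ℝ) (B : Matrix ιx ιu ℝ) (Q : Matrix ιx ιx ℝ)
    (R : Matrix ιu ιu ℝ) (S : Matrix ιu ιx ℝ) :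
    Matrix (Fin H × ιu) (Fin H × ιu) ℝ :=
  Matrix.of fun p q => Mblk A B Q R S ((p.1 : ℕ) + 1) ((q.1 : ℕ) + 1) p.2 q.2

/-- The `H × 1` block matrix `J^{(H)}`. -/
def JH (H : ℕ) (A : Matrix ιx ιx ℝ) (B : Matrix ιx ιu ℝ) (Q : Matrix ιx ιx ℝ)
    (S : Matrix ιu ιx ℝ) : Matrix (Fin H × ιu) ιx ℝ :=
  Matrix.of fun p b => Jblk A B Q S ((p.1 : ℕ) + 1) p.2 b

/-- `L^{(H)} = -(M^{(H)})⁻¹ J^{(H)}`. -/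
def LH (H : ℕ) (A : Matrix ιx ιx ℝ) (B : Matrix ιx ιu ℝ) (Q : Matrix ιx ιx ℝ)
    (R : Matrix ιu ιu ℝ) (S : Matrix ιu ιx ℝ) : Matrix (Fin H × ιu) ιx ℝ :=
  -(MH H A B Q R S)⁻¹ * JH H A B Q S

/-- The `k`-th block `L_k^{(H)}` of `L^{(H)}` (0-based index `k : Fin H` is block `k+1`). -/
def LHblk (H : ℕ) (A : Matrix ιx ιx ℝ) (B : Matrix ιx ιu ℝ) (Q : Matrix ιx ιx ℝ)
    (R : Matrix ιu ιu ℝ) (S : Matrix ιu ιx ℝ) (k : Fin H) : Matrix ιu ιx ℝ :=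
  Matrix.of fun a b => LH H A B Q R S (k, a) b

/-- `P` solves the discrete algebraic Riccati equation. -/
def IsDARE (A : Matrix ιx ιx ℝ) (B : Matrix ιx ιu ℝ) (Q : Matrix ιx ιx ℝ)
    (R : Matrix ιu ιu ℝ) (S : Matrix ιu ιx ℝ) (P : Matrix ιx ιx ℝ) : Prop :=
  P = Aᵀ * P * A - (Aᵀ * P * B + Sᵀ) * (R + Bᵀ * P * B)⁻¹ * (Bᵀ * P * A + S) + Q

/-- The optimal LQR state-feedback gain `K = (R + BᵀPB)⁻¹(BᵀPA + S)`. -/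
def optGain (A : Matrix ιx ιx ℝ) (B : Matrix ιx ιu ℝ)
    (R : Matrix ιu ιu ℝ) (S : Matrix ιu ιx ℝ) (P : Matrix ιx ιx ℝ) : Matrix ιu ιx ℝ :=
  (R + Bᵀ * P * B)⁻¹ * (Bᵀ * P * A + S)

end LQRDefs

/-- The constant `c_M`. -/
def cMconst (N : ℕ) (τ ρ b q r s nQ nS : ℝ) : ℝ :=
  b ^ 2 * (N : ℝ) ^ 2 * (τ ^ 2 * nQ / (1 - Real.exp (-(2 * ρ))) + 2 * q)
    + b * (N : ℝ) * (s + τ * nS) + r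

/-- The constant `c_J`. -/
def cJconst (N : ℕ) (τ ρ b q s nQ nS : ℝ) : ℝ :=
  b * (N : ℝ) * (τ ^ 2 * nQ / (1 - Real.exp (-(2 * ρ))) + 2 * q) + s + τ * nS

/-- The constant `c_K` of the open-loop-stable spatial-decay theorem. -/
def cKconst (N : ℕ) (τ ρ b q s nB nQ nS nK lmin : ℝ) : ℝ :=
  2 * τ ^ 3 * (nB ^ 2 * nK * nQ + nB * nK * nS)
      / ((1 - Real.exp (-(2 * ρ))) ^ ((5 : ℝ) / 2) * lmin)
    + 2 * τ ^ 2 * (nB * nQ + nS) / ((1 - Real.exp (-(2 * ρ))) ^ 2 * lmin)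
    + 2 * cJconst N τ ρ b q s nQ nS

/-- The constant `γ_K` of the open-loop-stable spatial-decay theorem. -/
def gammaKconst (N : ℕ) (γ τ ρ a b q r s nB nQ nS lmin lmaxR : ℝ) : ℝ :=
  (γ * ρ * lmin / (ρ + Real.log (a * (N : ℝ)))) *
    (1 / ((lmaxR + 4 * τ ^ 2 * (nB ^ 2 * nQ + nB * nS)
          / (1 - Real.exp (-(2 * ρ))) ^ 2) *
        Real.log (γ * cMconst N τ ρ b q r s nQ nS * (N : ℝ) ^ 2
          + cMconst N τ ρ b q r s nQ nS * (N : ℝ) + 1) + lmin))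


/-!
Every block of a term `(Aᵗ)ᵀ Q A^{t+m}` of `G A^m` obeys two bounds. Spatially, a product of
SED matrices is SED with the constant multiplied by `aN` per factor, so the block is at most
`q (aN)^{2t+m} e^{-γ d}`; temporally, stability bounds it by `τ² ‖Q‖ e^{-ρ(2t+m)}`.
Writing `γ d = x (ρ + log (aN))`, these read `q e^{-ρx} (aN)^{2t+m-x}` and
`τ² ‖Q‖ e^{-ρx} e^{-ρ(2t+m-x)}`. Using the first bound while `2t + m < x` and the second
afterwards leaves two geometric series, at most `2q` and `τ² ‖Q‖ / (1 - e^{-2ρ})` times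
`e^{-ρx} = e^{-γρ d / (ρ + log (aN))}`. The single product `S A^m` is handled in the same way.
-/

namespace Matrix

open Function

variable {𝕜 : Type*} [RCLike 𝕜] {m n m' n' : Type*} [Fintype m] [Fintype n] [DecidableEq m]
  [DecidableEq n]

theorem l2_opNorm_one_submatrix_le [Fintype m'] [DecidableEq m'] {f : m' → m} (hf : Injective f) :
    ‖(1 : Matrix m m 𝕜).submatrix f id‖ ≤ 1 := by
  set P := (1 : Matrix m m 𝕜).submatrix f id
  have hPP : P * Pᴴ = 1 := by
    rw [conjTranspose_submatrix, conjTranspose_one, ← submatrix_mul _ _ _ _ _ bijective_id,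
      Matrix.one_mul, submatrix_one _ hf]
  have hone : ‖(1 : Matrix m' m' 𝕜)‖ ≤ 1 :=
    ContinuousLinearMap.opNorm_le_bound _ zero_le_one fun v => by simp
  have hC := l2_opNorm_conjTranspose_mul_self Pᴴ
  rw [conjTranspose_conjTranspose, hPP, l2_opNorm_conjTranspose] at hC
  nlinarith [norm_nonneg P]

theorem submatrix_eq_one_submatrix_mul_mul (X : Matrix m n 𝕜) (f : m' → m) (g : n' → n) :
    X.submatrix f g =
      (1 : Matrix m m 𝕜).submatrix f id * X * ((1 : Matrix n n 𝕜).submatrix g id)ᴴ := by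
  rw [conjTranspose_submatrix, conjTranspose_one, ← submatrix_id_id X,
    ← submatrix_mul _ _ _ _ _ bijective_id, ← submatrix_mul _ _ _ _ _ bijective_id,
    Matrix.one_mul, Matrix.mul_one]
  rfl

theorem l2_opNorm_submatrix_le [Fintype m'] [Fintype n'] [DecidableEq m'] [DecidableEq n']
    (X : Matrix m n 𝕜) {f : m' → m} {g : n' → n} (hf : Injective f) (hg : Injective g) :
    ‖X.submatrix f g‖ ≤ ‖X‖ := by
  rw [submatrix_eq_one_submatrix_mul_mul]
  calc _ ≤ ‖(1 : Matrix m m 𝕜).submatrix f id‖ * ‖X‖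
        * ‖((1 : Matrix n n 𝕜).submatrix g id)ᴴ‖ :=
        (l2_opNorm_mul _ _).trans (by gcongr; exact l2_opNorm_mul _ _)
    _ ≤ 1 * ‖X‖ * 1 := by
        rw [l2_opNorm_conjTranspose]
        gcongr
        exacts [l2_opNorm_one_submatrix_le hf, l2_opNorm_one_submatrix_le hg]
    _ = ‖X‖ := by ring

theorem l2_opNorm_transpose (X : Matrix m n ℝ) : ‖Xᵀ‖ = ‖X‖ := by
  rw [← conjTranspose_eq_transpose_of_trivial, l2_opNorm_conjTranspose]

end Matrix

section Blocks

variable {N : ℕ} {d e f : Fin N → ℕ}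

theorem norm_blk_le (X : Matrix (BIdx d) (BIdx e) ℝ) (i j : Fin N) : ‖blk X i j‖ ≤ ‖X‖ :=
  l2_opNorm_submatrix_le X sigma_mk_injective sigma_mk_injective

theorem blk_mul (X : Matrix (BIdx d) (BIdx e) ℝ) (Y : Matrix (BIdx e) (BIdx f) ℝ)
    (i j : Fin N) : blk (X * Y) i j = ∑ k, blk X i k * blk Y k j := by
  ext a b
  simp only [blk, mul_apply, Matrix.sum_apply, of_apply]
  rw [← Finset.univ_sigma_univ, Finset.sum_sigma]

theorem blk_transpose (X : Matrix (BIdx d) (BIdx e) ℝ) (i j : Fin N) :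
    blk Xᵀ i j = (blk X j i)ᵀ :=
  rfl

theorem HasSum.blk {ι : Type*} {F : ι → Matrix (BIdx d) (BIdx e) ℝ}
    {X : Matrix (BIdx d) (BIdx e) ℝ} (h : HasSum F X) (i j : Fin N) :
    HasSum (fun t => blk (F t) i j) (blk X i j) :=
  Pi.hasSum.2 fun a => Pi.hasSum.2 fun b => Pi.hasSum.1 (Pi.hasSum.1 h ⟨i, a⟩) ⟨j, b⟩

end Blocks

namespace IsSED

variable {N : ℕ} {d e f : Fin N → ℕ} {dist : Fin N → Fin N → ℝ} {a c c₁ c₂ γ : ℝ}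

theorem nonneg {X : Matrix (BIdx d) (BIdx e) ℝ} (hX : IsSED dist c γ X) (i j : Fin N) : 0 ≤ c :=
  nonneg_of_mul_nonneg_left ((norm_nonneg _).trans (hX i j)) (Real.exp_pos _)

theorem mul (hdist : IsDist dist) (hγ : 0 ≤ γ) {X : Matrix (BIdx d) (BIdx e) ℝ}
    {Y : Matrix (BIdx e) (BIdx f) ℝ} (hX : IsSED dist c₁ γ X) (hY : IsSED dist c₂ γ Y) :
    IsSED dist (c₁ * c₂ * N) γ (X * Y) := by
  intro i j
  have hterm (k : Fin N) :
      ‖blk X i k * blk Y k j‖ ≤ c₁ * c₂ * Real.exp (-γ * dist i j) := calc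
    ‖blk X i k * blk Y k j‖ ≤ ‖blk X i k‖ * ‖blk Y k j‖ := l2_opNorm_mul _ _
    _ ≤ (c₁ * Real.exp (-γ * dist i k)) * (c₂ * Real.exp (-γ * dist k j)) :=
        mul_le_mul (hX i k) (hY k j) (norm_nonneg _) (by have := hX.nonneg i k; positivity)
    _ = c₁ * c₂ * Real.exp (-γ * (dist i k + dist k j)) := by
        rw [mul_add, Real.exp_add]; ring
    _ ≤ c₁ * c₂ * Real.exp (-γ * dist i j) := by
        have := mul_nonneg (hX.nonneg i k) (hY.nonneg k j)
        gcongr _ * ?_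
        exact Real.exp_le_exp.2 (by nlinarith [hdist.triangle i j k])
  calc ‖blk (X * Y) i j‖ ≤ ∑ k, ‖blk X i k * blk Y k j‖ := by
        rw [blk_mul]; exact norm_sum_le _ _
    _ ≤ ∑ _k : Fin N, c₁ * c₂ * Real.exp (-γ * dist i j) := Finset.sum_le_sum fun k _ => hterm k
    _ = c₁ * c₂ * N * Real.exp (-γ * dist i j) := by
        rw [Finset.sum_const, Finset.card_univ, Fintype.card_fin, nsmul_eq_mul]; ring

theorem transpose (hdist : IsDist dist) {X : Matrix (BIdx d) (BIdx e) ℝ}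
    (hX : IsSED dist c γ X) : IsSED dist c γ Xᵀ := fun i j => by
  rw [blk_transpose, l2_opNorm_transpose, hdist.symm]
  exact hX j i

theorem mul_pow (hdist : IsDist dist) (hγ : 0 ≤ γ) {X : Matrix (BIdx d) (BIdx e) ℝ}
    {A : Matrix (BIdx e) (BIdx e) ℝ} (hX : IsSED dist c γ X) (hA : IsSED dist a γ A) (k : ℕ) :
    IsSED dist (c * (a * N) ^ k) γ (X * A ^ k) := by
  induction k with
  | zero => simpa using hX
  | succ k ih =>
    rw [pow_succ A, ← Matrix.mul_assoc]
    convert ih.mul hdist hγ hA using 1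
    ring

theorem transpose_pow_mul_mul_pow (hdist : IsDist dist) (hγ : 0 ≤ γ)
    {Q A : Matrix (BIdx d) (BIdx d) ℝ} (hQ : IsSED dist c γ Q) (hA : IsSED dist a γ A)
    (t m : ℕ) : IsSED dist (c * (a * N) ^ (2 * t + m)) γ ((A ^ t)ᵀ * Q * A ^ (t + m)) := by
  have h :=
    (((hQ.mul_pow hdist hγ hA (t + m)).transpose hdist).mul_pow hdist hγ hA t).transpose hdist
  rw [Matrix.transpose_mul, Matrix.transpose_transpose, ← Matrix.mul_assoc] at h
  convert h using 1
  ring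

end IsSED

namespace IsExpStable

variable {n : Type*} [Fintype n] [DecidableEq n] {τ ρ : ℝ} {A : Matrix n n ℝ}

theorem norm_mul_pow_le {m : Type*} [Fintype m] [DecidableEq m] (hA : IsExpStable τ ρ A)
    (X : Matrix m n ℝ) (k : ℕ) : ‖X * A ^ k‖ ≤ τ * ‖X‖ * Real.exp (-ρ * k) :=
  calc ‖X * A ^ k‖ ≤ ‖X‖ * ‖A ^ k‖ := l2_opNorm_mul _ _
    _ ≤ ‖X‖ * (τ * Real.exp (-ρ * k)) := by gcongr; exact hA k
    _ = τ * ‖X‖ * Real.exp (-ρ * k) := by ring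

theorem norm_transpose_pow_mul_mul_pow_le (hA : IsExpStable τ ρ A) (Q : Matrix n n ℝ)
    (t m : ℕ) :
    ‖(A ^ t)ᵀ * Q * A ^ (t + m)‖ ≤ τ ^ 2 * ‖Q‖ * Real.exp (-ρ * ((2 * t + m : ℕ) : ℝ)) :=
  calc ‖(A ^ t)ᵀ * Q * A ^ (t + m)‖ ≤ ‖(A ^ t)ᵀ‖ * ‖Q * A ^ (t + m)‖ := by
        rw [Matrix.mul_assoc]; exact l2_opNorm_mul _ _
    _ ≤ (τ * Real.exp (-ρ * t)) * (τ * ‖Q‖ * Real.exp (-ρ * ((t + m : ℕ) : ℝ))) := by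
        rw [l2_opNorm_transpose]
        exact mul_le_mul (hA t) (hA.norm_mul_pow_le Q _) (norm_nonneg _)
          ((norm_nonneg _).trans (hA t))
    _ = τ ^ 2 * ‖Q‖ * Real.exp (-ρ * ((2 * t + m : ℕ) : ℝ)) := by
        rw [mul_mul_mul_comm, ← Real.exp_add]; push_cast; ring_nf

theorem hasSum_Gmat_mul_pow (hA : IsExpStable τ ρ A) (hρ : 0 < ρ) (Q : Matrix n n ℝ) (m : ℕ) :
    HasSum (fun t => (A ^ t)ᵀ * Q * A ^ (t + m)) (Gmat A Q * A ^ m) := by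
  have hbound : ∀ t : ℕ, ‖(A ^ t)ᵀ * Q * A ^ t‖ ≤ τ ^ 2 * ‖Q‖ * Real.exp (-(2 * ρ)) ^ t := by
    intro t
    have h := hA.norm_transpose_pow_mul_mul_pow_le Q t 0
    rw [add_zero] at h
    refine h.trans_eq ?_
    rw [← Real.exp_nat_mul]; push_cast; ring_nf
  have hsum : Summable fun t => (A ^ t)ᵀ * Q * A ^ t :=
    .of_norm_bounded ((summable_geometric_of_lt_one (Real.exp_nonneg _)
      (Real.exp_lt_one_iff.2 (by linarith))).mul_left _) hbound
  simpa only [Gmat, Matrix.mul_assoc, ← pow_add] using hsum.hasSum.mul_right (A ^ m)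

end IsExpStable

section Interpolation

open Real

variable {u c C L ρ s : ℝ}

theorem le_add_of_le_mul_exp (hL : 0 ≤ L) (hρ : 0 ≤ ρ) (hc : 0 ≤ c) (hC : 0 ≤ C)
    (h₁ : u ≤ c * exp (s * L)) (h₂ : u ≤ C * exp (-ρ * s)) : u ≤ c + C := by
  rcases le_total s 0 with hs | hs
  · calc u ≤ c * exp (s * L) := h₁
      _ ≤ c * 1 := by gcongr; exact exp_le_one_iff.2 (mul_nonpos_of_nonpos_of_nonneg hs hL)
      _ ≤ c + C := by linarith
  · calc u ≤ C * exp (-ρ * s) := h₂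
      _ ≤ C * 1 := by gcongr; exact exp_le_one_iff.2 (by nlinarith)
      _ ≤ c + C := by linarith

theorem tsum_le_of_le_mul_exp {u : ℕ → ℝ} (hL : log 2 ≤ L) (hρ : 0 < ρ) (hc : 0 ≤ c)
    (hC : 0 ≤ C) (hu : ∀ t, 0 ≤ u t) (h₁ : ∀ t : ℕ, u t ≤ c * exp ((2 * t + s) * L))
    (h₂ : ∀ t : ℕ, u t ≤ C * exp (-ρ * (2 * t + s))) :
    Summable u ∧ ∑' t, u t ≤ C / (1 - exp (-(2 * ρ))) + 2 * c := by
  set E := exp (-(2 * ρ))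
  have hE : E < 1 := exp_lt_one_iff.2 (by linarith)
  have hgeom : Summable (fun t : ℕ => C * E ^ t) :=
    (summable_geometric_of_lt_one (exp_nonneg _) hE).mul_left C
  -- the terms with `2 * t + s < 0` are controlled by `h₁`, the others by `h₂`
  set T := ⌈-s / 2⌉₊
  have htail : ∀ t, u (t + T) ≤ C * E ^ t := fun t => by
    have hT : -s / 2 ≤ T := Nat.le_ceil _
    refine (h₂ _).trans ?_
    rw [← exp_nat_mul]
    refine mul_le_mul_of_nonneg_left (exp_le_exp.2 ?_) hC
    push_cast
    nlinarith [mul_nonneg hρ.le (show 0 ≤ 2 * (T : ℝ) + s by linarith)]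
  have hhead : ∀ j < T, u (T - 1 - j) ≤ c * (1 / 2) ^ j := fun j hj => by
    have hT : ((T - 1 : ℕ) : ℝ) < -s / 2 := Nat.lt_ceil.1 (by omega)
    have hL0 : 0 ≤ L := (log_nonneg one_le_two).trans hL
    calc u (T - 1 - j) ≤ c * exp ((2 * ((T - 1 - j : ℕ) : ℝ) + s) * L) := h₁ _
      _ ≤ c * exp (-L) ^ j := by
        rw [← exp_nat_mul]
        refine mul_le_mul_of_nonneg_left (exp_le_exp.2 ?_) hc
        rw [Nat.cast_sub (show j ≤ T - 1 by omega)]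
        have hj0 : (0 : ℝ) ≤ j := j.cast_nonneg
        nlinarith [mul_nonneg hL0 (show 0 ≤ -(2 * ((T - 1 : ℕ) : ℝ) + s) + j by linarith)]
      _ ≤ c * (1 / 2) ^ j := by
        gcongr
        calc exp (-L) ≤ exp (-log 2) := exp_le_exp.2 (neg_le_neg hL)
          _ = 1 / 2 := by rw [Real.exp_neg, exp_log two_pos, one_div]
  have hsum_tail : Summable (fun t => u (t + T)) :=
    .of_nonneg_of_le (fun t => hu _) htail hgeom
  have hsum : Summable u := (summable_nat_add_iff T).1 hsum_tail
  refine ⟨hsum, ?_⟩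
  rw [← hsum.sum_add_tsum_nat_add T, add_comm]
  gcongr
  · calc ∑' t, u (t + T) ≤ ∑' t, C * E ^ t := hsum_tail.tsum_le_tsum htail hgeom
      _ = C / (1 - E) := by
          rw [tsum_mul_left, tsum_geometric_of_lt_one (exp_nonneg _) hE, div_eq_mul_inv]
  · calc ∑ t ∈ Finset.range T, u t = ∑ j ∈ Finset.range T, u (T - 1 - j) :=
          (Finset.sum_range_reflect u T).symm
      _ ≤ ∑ j ∈ Finset.range T, c * (1 / 2) ^ j :=
          Finset.sum_le_sum fun j hj => hhead j (Finset.mem_range.1 hj)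
      _ ≤ 2 * c := by
          rw [← Finset.mul_sum, mul_comm]
          exact mul_le_mul_of_nonneg_right (sum_geometric_two_le T) hc

end Interpolation

section DecayRate

open Real

variable {u c C ρ b γ d : ℝ}

theorem pow_mul_exp_neg_eq (hb : 0 < b) (hρb : ρ + log b ≠ 0) (k : ℕ) :
    b ^ k * exp (-γ * d) =
      exp (-(γ * ρ / (ρ + log b)) * d) * exp ((k - γ * d / (ρ + log b)) * log b) := by
  rw [← exp_log hb, ← exp_nat_mul, ← exp_add, ← exp_add, log_exp]
  congr 1
  field_simp
  ring

theorem exp_neg_mul_eq {L : ℝ} (hρL : ρ + L ≠ 0) (k : ℝ) :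
    exp (-ρ * k) = exp (-(γ * ρ / (ρ + L)) * d) * exp (-ρ * (k - γ * d / (ρ + L))) := by
  rw [← exp_add]
  congr 1
  field_simp
  ring

theorem le_mul_exp_of_le_pow_mul_exp {k : ℕ} (hb : 1 ≤ b) (hρ : 0 < ρ) (hc : 0 ≤ c)
    (hC : 0 ≤ C) (h₁ : u ≤ c * b ^ k * exp (-γ * d)) (h₂ : u ≤ C * exp (-ρ * k)) :
    u ≤ (c + C) * exp (-(γ * ρ / (ρ + log b)) * d) := by
  have hlog : 0 ≤ log b := log_nonneg hb
  have hρb : ρ + log b ≠ 0 := by positivity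
  have hw := exp_pos (-(γ * ρ / (ρ + log b)) * d)
  refine (le_add_of_le_mul_exp (s := k - γ * d / (ρ + log b)) hlog hρ.le
    (mul_nonneg hc hw.le) (mul_nonneg hC hw.le) (h₁.trans_eq ?_) (h₂.trans_eq ?_)).trans_eq
    (add_mul c C _).symm
  · rw [mul_assoc, pow_mul_exp_neg_eq (by positivity) hρb]; ring
  · rw [exp_neg_mul_eq (γ := γ) (d := d) hρb]; ring

theorem tsum_le_mul_exp_of_le_pow_mul_exp {u : ℕ → ℝ} {m : ℕ} (hb : 2 ≤ b) (hρ : 0 < ρ)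
    (hc : 0 ≤ c) (hC : 0 ≤ C) (hu : ∀ t, 0 ≤ u t)
    (h₁ : ∀ t : ℕ, u t ≤ c * b ^ (2 * t + m) * exp (-γ * d))
    (h₂ : ∀ t : ℕ, u t ≤ C * exp (-ρ * ((2 * t + m : ℕ) : ℝ))) :
    Summable u ∧
      ∑' t, u t ≤ (C / (1 - exp (-(2 * ρ))) + 2 * c) * exp (-(γ * ρ / (ρ + log b)) * d) := by
  have hρb : ρ + log b ≠ 0 := by have := log_nonneg (one_le_two.trans hb); positivity
  have hw := exp_pos (-(γ * ρ / (ρ + log b)) * d)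
  obtain ⟨hsum, hle⟩ := tsum_le_of_le_mul_exp (s := m - γ * d / (ρ + log b))
    (log_le_log two_pos hb) hρ (mul_nonneg hc hw.le) (mul_nonneg hC hw.le) hu
    (fun t => (h₁ t).trans_eq (by
      rw [mul_assoc, pow_mul_exp_neg_eq (by positivity) hρb]; push_cast; ring_nf))
    (fun t => (h₂ t).trans_eq (by
      rw [exp_neg_mul_eq (γ := γ) (d := d) hρb]; push_cast; ring_nf))
  exact ⟨hsum, hle.trans_eq (by ring)⟩

end DecayRate

theorem GA_SA_SED_general
    {N : ℕ} (hN : 2 ≤ N) {nxd nud : Fin N → ℕ}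
    (dist : Fin N → Fin N → ℝ) (hdist : IsDist dist)
    (A : Matrix (BIdx nxd) (BIdx nxd) ℝ)
    (Q : Matrix (BIdx nxd) (BIdx nxd) ℝ)
    (S : Matrix (BIdx nud) (BIdx nxd) ℝ)
    (γ a q s : ℝ) (hγ : 0 < γ) (ha : 1 ≤ a) (hq : 0 < q) (hs : 0 < s)
    (hA : IsSED dist a γ A) (hQ : IsSED dist q γ Q) (hS : IsSED dist s γ S)
    (τ ρ : ℝ) (hτ : 1 ≤ τ) (hρ : 0 < ρ)
    (hAst : IsExpStable τ ρ A) :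
    ∀ m : ℕ,
      IsSED dist (τ ^ 2 * ‖Q‖ / (1 - Real.exp (-(2 * ρ))) + 2 * q)
        (γ * ρ / (ρ + Real.log (a * (N : ℝ)))) (Gmat A Q * A ^ m) ∧
      IsSED dist (s + τ * ‖S‖)
        (γ * ρ / (ρ + Real.log (a * (N : ℝ)))) (S * A ^ m) := by
  intro m
  have haN : 2 ≤ a * N := by
    have : (2 : ℝ) ≤ N := by exact_mod_cast hN
    nlinarith
  refine ⟨fun i j => ?_, fun i j => ?_⟩
  · obtain ⟨hsum, hle⟩ := tsum_le_mul_exp_of_le_pow_mul_exp haN hρ hq.le (by positivity)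
      (fun t => norm_nonneg _) (fun t => hQ.transpose_pow_mul_mul_pow hdist hγ.le hA t m i j)
      (fun t => (norm_blk_le _ i j).trans (hAst.norm_transpose_pow_mul_mul_pow_le Q t m))
    exact (((hAst.hasSum_Gmat_mul_pow hρ Q m).blk i j).norm_le_of_bounded hsum.hasSum
      fun t => le_rfl).trans hle
  · exact le_mul_exp_of_le_pow_mul_exp (one_le_two.trans haN) hρ hs.le (by positivity)
      (hS.mul_pow hdist hγ.le hA m i j) ((norm_blk_le _ i j).trans (hAst.norm_mul_pow_le S m))

/-- Lemma: SED structure of `G A^m` and `S A^m`. -/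
theorem GA_SA_SED
    {N : ℕ} (hN : 2 ≤ N) {nxd nud : Fin N → ℕ}
    (hnx : ∀ i, 1 ≤ nxd i) (hnu : ∀ i, 1 ≤ nud i)
    (dist : Fin N → Fin N → ℝ) (hdist : IsDist dist)
    (A : Matrix (BIdx nxd) (BIdx nxd) ℝ)
    (Q : Matrix (BIdx nxd) (BIdx nxd) ℝ)
    (S : Matrix (BIdx nud) (BIdx nxd) ℝ)
    (γ a q s : ℝ) (hγ : 0 < γ) (ha : 1 ≤ a) (hq : 0 < q) (hs : 0 < s)
    (hA : IsSED dist a γ A) (hQ : IsSED dist q γ Q) (hS : IsSED dist s γ S)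
    (τ ρ : ℝ) (hτ : 1 ≤ τ) (hρ : 0 < ρ)
    (hAst : IsExpStable τ ρ A) :
    ∀ m : ℕ,
      IsSED dist (τ ^ 2 * ‖Q‖ / (1 - Real.exp (-(2 * ρ))) + 2 * q)
        (γ * ρ / (ρ + Real.log (a * (N : ℝ)))) (Gmat A Q * A ^ m) ∧
      IsSED dist (s + τ * ‖S‖)
        (γ * ρ / (ρ + Real.log (a * (N : ℝ)))) (S * A ^ m) :=
  GA_SA_SED_general hN dist hdist A Q S γ a q s hγ ha hq hs hA hQ hS τ ρ hτ hρ hAst
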